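/- Assume u := 1 + b₂² + ⋯ + b_n² is a unit of ZMod N. Then for all x, x' ∈ L_N, the character sum ∑_{z ∈ L_N} e(⟨x − x', z⟩) equals N^{n−1} if x = x', and equals 0 if x ≠ x'. In particular, the functions χ_x(z) := e(−⟨x,z⟩) for x ∈ L_N are pairwise orthogonal as complex-valued functions on L_N. -/

import Mathlib

/-- The additive character `e : ZMod N → ℂ`, `e c = exp(2πi · c.val / N)`. -/
noncomputable def eChar (N : ℕ) (c : ZMod N) : ℂ :=
  Complex.exp (2 * Real.pi * Complex.I * (c.val : ℂ) / (N : ℂ))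

lemma eRoot (N : ℕ) [NeZero N] : (Complex.exp (2 * Real.pi * Complex.I / N)) ^ N = 1 := by
  rw [← Complex.exp_nat_mul]
  have hN : (N : ℂ) ≠ 0 := Nat.cast_ne_zero.mpr (NeZero.ne N)
  rw [show (N : ℂ) * (2 * Real.pi * Complex.I / N) = 2 * Real.pi * Complex.I by
    field_simp]
  exact Complex.exp_two_pi_mul_I

noncomputable def psi (N : ℕ) [NeZero N] : AddChar (ZMod N) ℂ :=
  AddChar.zmodChar N (eRoot N)

lemma psi_primitive (N : ℕ) [NeZero N] : AddChar.IsPrimitive (psi N) :=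
  AddChar.zmodChar_primitive_of_primitive_root N
    (Complex.isPrimitiveRoot_exp N (NeZero.ne N))

lemma eChar_eq_psi (N : ℕ) [NeZero N] (c : ZMod N) : eChar N c = psi N c := by
  rw [psi, AddChar.zmodChar_apply, ← Complex.exp_nat_mul, eChar]
  ring_nf

lemma psi_sum (N : ℕ) [NeZero N] {ι : Type*} (s : Finset ι) (f : ι → ZMod N) :
    psi N (∑ i ∈ s, f i) = ∏ i ∈ s, psi N (f i) := by
  induction s using Finset.cons_induction with
  | empty => simp
  | cons a s ha ih => rw [Finset.sum_cons, Finset.prod_cons, AddChar.map_add_eq_mul, ih]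

lemma sum_erase_zero {n : ℕ} {M : Type*} [AddCommGroup M] (f : Fin (n + 1) → M) :
    ∑ i ∈ Finset.univ.erase 0, f i = ∑ i : Fin n, f i.succ := by
  have h := Finset.add_sum_erase Finset.univ f (Finset.mem_univ 0)
  rw [Fin.sum_univ_succ f] at h
  exact add_left_cancel h

lemma key (n N : ℕ) [NeZero N] (b : Fin (n + 1) → ZMod N)
    (hu : IsUnit (1 + ∑ i ∈ Finset.univ.erase 0, b i ^ 2))
    (d : Fin (n + 1) → ZMod N)
    (hd : d 0 = ∑ i ∈ Finset.univ.erase 0, b i * d i) :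
    (∑ z ∈ Finset.univ.filter
        (fun z : Fin (n + 1) → ZMod N => z 0 = ∑ i ∈ Finset.univ.erase 0, b i * z i),
        eChar N (∑ i, d i * z i)) = if d = 0 then (N : ℂ) ^ n else 0 := by
  classical
  set c : Fin n → ZMod N := fun i => d 0 * b i.succ + d i.succ with hc
  have step1 : (∑ z ∈ Finset.univ.filter
        (fun z : Fin (n + 1) → ZMod N => z 0 = ∑ i ∈ Finset.univ.erase 0, b i * z i),
        eChar N (∑ i, d i * z i))
      = ∑ t : Fin n → ZMod N,
          eChar N (∑ i, d i * (Fin.cons (∑ j : Fin n, b j.succ * t j) t : Fin (n+1) → ZMod N) i) := by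
    refine (Finset.sum_bij (fun t _ => (Fin.cons (∑ j : Fin n, b j.succ * t j) t : Fin (n+1) → ZMod N))
      ?_ ?_ ?_ ?_).symm
    · intro t _
      simp only [Finset.mem_filter, Finset.mem_univ, true_and]
      rw [sum_erase_zero]
      simp
    · intro t1 _ t2 _ h
      funext i
      have := congrFun h i.succ
      simpa using this
    · intro z hz
      simp only [Finset.mem_filter, Finset.mem_univ, true_and] at hz
      refine ⟨fun i => z i.succ, Finset.mem_univ _, ?_⟩
      funext i
      refine Fin.cases ?_ (fun j => ?_) i
      · show (Fin.cons _ _ : Fin (n+1) → ZMod N) 0 = z 0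
        rw [Fin.cons_zero, hz, sum_erase_zero]
      · show (Fin.cons _ _ : Fin (n+1) → ZMod N) j.succ = z j.succ
        rw [Fin.cons_succ]
    · intro t _; rfl
  rw [step1]
  have step2 : ∀ t : Fin n → ZMod N,
      eChar N (∑ i, d i * (Fin.cons (∑ j : Fin n, b j.succ * t j) t : Fin (n+1) → ZMod N) i)
      = ∏ i : Fin n, psi N (c i * t i) := by
    intro t
    have he : (∑ i, d i * (Fin.cons (∑ j : Fin n, b j.succ * t j) t : Fin (n+1) → ZMod N) i)
        = ∑ i : Fin n, c i * t i := by
      rw [Fin.sum_univ_succ]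
      simp only [Fin.cons_zero, Fin.cons_succ, hc]
      rw [Finset.mul_sum, ← Finset.sum_add_distrib]
      congr 1; funext i; ring
    rw [he, eChar_eq_psi, psi_sum]
  simp_rw [step2]
  have step3 : (∑ t : Fin n → ZMod N, ∏ i : Fin n, psi N (c i * t i))
      = ∏ i : Fin n, ∑ v : ZMod N, psi N (c i * v) := by
    rw [Finset.prod_univ_sum]
    rw [Fintype.piFinset_univ]
  rw [step3]
  have step4 : ∀ i : Fin n, (∑ v : ZMod N, psi N (c i * v))
      = if c i = 0 then (N : ℂ) else 0 := by
    intro i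
    simp_rw [mul_comm (c i)]
    rw [AddChar.sum_mulShift (c i) (psi_primitive N), ZMod.card]
    split <;> simp
  simp_rw [step4]
  by_cases hdz : d = 0
  · subst hdz
    simp [hc]
  · rw [if_neg hdz]
    have hex : ∃ i : Fin n, c i ≠ 0 := by
      by_contra hall
      push_neg at hall
      have hds : ∀ i : Fin n, d i.succ = -(d 0 * b i.succ) := by
        intro i
        have := hall i
        rw [hc] at this
        linear_combination this
      have h1 : d 0 = ∑ i : Fin n, b i.succ * d i.succ := by
        rw [hd, sum_erase_zero]
      have h2 : d 0 = -(d 0 * ∑ i : Fin n, b i.succ ^ 2) := by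
        conv_lhs => rw [h1]
        rw [Finset.mul_sum, ← Finset.sum_neg_distrib]
        apply Finset.sum_congr rfl
        intro i _
        rw [hds i]; ring
      have hd0 : d 0 * (1 + ∑ i : Fin n, b i.succ ^ 2) = 0 := by
        linear_combination h2
      rw [sum_erase_zero (fun i => b i ^ 2)] at hu
      have hd00 : d 0 = 0 := by
        obtain ⟨v, hv⟩ := hu
        calc d 0 = d 0 * (v : ZMod N) * ((v⁻¹ : (ZMod N)ˣ) : ZMod N) := by
              rw [mul_assoc, ← Units.val_mul, mul_inv_cancel, Units.val_one, mul_one]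
          _ = 0 := by rw [hv, hd0, zero_mul]
      apply hdz
      funext i
      refine Fin.cases ?_ (fun j => ?_) i
      · exact hd00
      · rw [hds j, hd00, zero_mul, neg_zero]; rfl
    obtain ⟨i, hi⟩ := hex
    exact Finset.prod_eq_zero (Finset.mem_univ i) (if_neg hi)

lemma eChar_conj (N : ℕ) [NeZero N] (c : ZMod N) :
    (starRingEnd ℂ) (eChar N c) = eChar N (-c) := by
  rw [eChar_eq_psi, eChar_eq_psi, AddChar.map_neg_eq_inv, psi, AddChar.zmodChar_apply,
    ← Complex.exp_nat_mul, ← Complex.exp_conj, ← Complex.exp_neg]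
  congr 1
  simp only [map_mul, map_div₀, Complex.conj_I, Complex.conj_natCast, Complex.conj_ofReal,
    map_ofNat]
  ring

/-- Assume `u = 1 + ∑_{i ≠ 0} (b i)²` is a unit of `ZMod N`.  Then for all
`x, x' ∈ L_N` the character sum `∑_{z ∈ L_N} e(⟨x - x', z⟩)` equals `N ^ n`
(i.e. `N^(dim - 1)`, the cardinality of `L_N`) if `x = x'`, and `0` if `x ≠ x'`.  In
particular, the characters `χ_x(z) = e(-⟨x, z⟩)` for `x ∈ L_N` are pairwise orthogonal
as complex-valued functions on `L_N`. -/
theorem stmt_9 (n N : ℕ) [NeZero N] (b : Fin (n + 1) → ZMod N)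
    (hu : IsUnit (1 + ∑ i ∈ Finset.univ.erase 0, b i ^ 2))
    (x x' : Fin (n + 1) → ZMod N)
    (hx : x 0 = ∑ i ∈ Finset.univ.erase 0, b i * x i)
    (hx' : x' 0 = ∑ i ∈ Finset.univ.erase 0, b i * x' i) :
    ((∑ z ∈ Finset.univ.filter
        (fun z : Fin (n + 1) → ZMod N => z 0 = ∑ i ∈ Finset.univ.erase 0, b i * z i),
        eChar N (∑ i, (x i - x' i) * z i)) =
      if x = x' then (N : ℂ) ^ n else 0) ∧
    (x ≠ x' →
      (∑ z ∈ Finset.univ.filter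
        (fun z : Fin (n + 1) → ZMod N => z 0 = ∑ i ∈ Finset.univ.erase 0, b i * z i),
        eChar N (-∑ i, x i * z i) * (starRingEnd ℂ) (eChar N (-∑ i, x' i * z i))) = 0) := by
  constructor
  · have hd : (fun i => x i - x' i) 0 = ∑ i ∈ Finset.univ.erase 0,
        b i * (fun i => x i - x' i) i := by
      simp only
      rw [hx, hx', ← Finset.sum_sub_distrib]
      apply Finset.sum_congr rfl; intro i _; ring
    have h := key n N b hu (fun i => x i - x' i) hd
    rw [h]
    have hiff : ((fun i => x i - x' i) = 0) = (x = x') := by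
      apply propext; constructor
      · intro h0; funext i
        have := congrFun h0 i
        simpa [sub_eq_zero] using this
      · intro h0; subst h0; funext i; simp
    simp only [hiff]
  · intro hne
    have hd : (fun i => x' i - x i) 0 = ∑ i ∈ Finset.univ.erase 0,
        b i * (fun i => x' i - x i) i := by
      simp only
      rw [hx, hx', ← Finset.sum_sub_distrib]
      apply Finset.sum_congr rfl; intro i _; ring
    have h := key n N b hu (fun i => x' i - x i) hd
    have hterm : ∀ z : Fin (n + 1) → ZMod N,
        eChar N (-∑ i, x i * z i) * (starRingEnd ℂ) (eChar N (-∑ i, x' i * z i))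
        = eChar N (∑ i, (x' i - x i) * z i) := by
      intro z
      rw [eChar_conj, neg_neg, eChar_eq_psi, eChar_eq_psi, eChar_eq_psi,
        ← AddChar.map_add_eq_mul]
      congr 1
      rw [neg_add_eq_sub, ← Finset.sum_sub_distrib]
      apply Finset.sum_congr rfl; intro i _; ring
    simp_rw [hterm]
    rw [h, if_neg]
    intro h0
    apply hne
    funext i
    have := congrFun h0 i
    simp only [Pi.zero_apply, sub_eq_zero] at this
    exact this.symm
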